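/- 95% concentration of the discrete Gaussian (rigorous form of the margin-of-error bound MOE ≤ ⌊1.96σ⌋ derived in the paper): For every real σ > 0, if X is distributed according to the discrete Gaussian N_ℤ(σ²), then Pr[|X| ≤ ⌊1.96·σ⌋ + 1] ≥ 0.95, where ⌊·⌋ denotes the floor function. -/

import Mathlib

/-!
Write `S = ∑_{n ∈ ℤ} exp (-n² / 2σ²)` and `T = ∑_{n > N} exp (-n² / 2σ²)` with
`N = ⌊1.96 σ⌋ + 1`; by symmetry the probability in question is `1 - 2T / S`. Poisson summation
gives `S ≥ σ √(2π)`, and the integral test together with `N ≥ 1.96 σ` gives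
`T ≤ ∫_{1.96σ}^∞ exp (-x² / 2σ²) dx = σ √(2π) Pr[Z ≥ 1.96] ≤ 0.025 σ √(2π)`, the last bound
being certified by integrating a Taylor lower bound of `exp (-u² / 2)` over `[0, 1.96]`.
-/

open Finset Real Set MeasureTheory

/-- The discrete Gaussian mass function `N_ℤ(v)` (real-valued) with variance
parameter `v = σ²`. -/
noncomputable def discreteGaussianPMF (v : ℝ) (x : ℤ) : ℝ :=
  Real.exp (-(x : ℝ) ^ 2 / (2 * v)) / ∑' y : ℤ, Real.exp (-(y : ℝ) ^ 2 / (2 * v))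

lemma hasDerivAt_sum_range_succ_neg_pow_div_factorial (m : ℕ) (x : ℝ) :
    HasDerivAt (fun y : ℝ ↦ ∑ k ∈ range (m + 1), (-y) ^ k / k.factorial)
      (-∑ k ∈ range m, (-x) ^ k / k.factorial) x := by
  have hterm : ∀ k ∈ range m, HasDerivAt (fun y : ℝ ↦ (-y) ^ (k + 1) / (k + 1).factorial)
      (-((-x) ^ k / k.factorial)) x := by
    intro k _
    refine (((hasDerivAt_neg x).pow (k + 1)).div_const ((k + 1).factorial : ℝ)).congr_deriv ?_
    rw [Nat.factorial_succ]
    push_cast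
    field_simp
  simp only [sum_range_succ' _ m]
  simpa using (HasDerivAt.fun_sum hterm).add_const 1

lemma neg_one_pow_mul_exp_neg_sub_sum_nonneg (m : ℕ) {x : ℝ} (hx : 0 ≤ x) :
    0 ≤ (-1) ^ m * (exp (-x) - ∑ k ∈ range m, (-x) ^ k / k.factorial) := by
  induction m generalizing x with
  | zero => simpa using (exp_pos _).le
  | succ m ih =>
    set R : ℝ → ℝ := fun y ↦
      (-1) ^ (m + 1) * (exp (-y) - ∑ k ∈ range (m + 1), (-y) ^ k / k.factorial)
    have hR : ∀ y, HasDerivAt R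
        ((-1) ^ m * (exp (-y) - ∑ k ∈ range m, (-y) ^ k / k.factorial)) y := by
      intro y
      refine (((hasDerivAt_neg y).exp.sub
        (hasDerivAt_sum_range_succ_neg_pow_div_factorial m y)).const_mul
          ((-1 : ℝ) ^ (m + 1))).congr_deriv ?_
      ring
    have hmono : MonotoneOn R (Ici 0) :=
      monotoneOn_of_hasDerivWithinAt_nonneg (convex_Ici 0)
        (fun y _ ↦ (hR y).continuousAt.continuousWithinAt) (fun y _ ↦ (hR y).hasDerivWithinAt)
        (fun y hy ↦ ih (interior_subset hy))
    simpa [R, sum_range_succ'] using hmono self_mem_Ici hx hx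

/-- `discreteGaussianPMF (σ ^ 2) x` unfolds to
`gaussianWeight σ x / ∑' y : ℤ, gaussianWeight σ y`. -/
noncomputable def gaussianWeight (σ x : ℝ) : ℝ := exp (-x ^ 2 / (2 * σ ^ 2))

lemma gaussianWeight_eq_exp_neg_mul_sq (σ x : ℝ) :
    gaussianWeight σ x = exp (-(2 * σ ^ 2)⁻¹ * x ^ 2) := by
  rw [gaussianWeight, neg_div, div_eq_inv_mul, neg_mul]

lemma gaussianWeight_pos (σ x : ℝ) : 0 < gaussianWeight σ x := exp_pos _

lemma gaussianWeight_even (σ : ℝ) : (gaussianWeight σ).Even := fun x ↦ by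
  simp [gaussianWeight]

lemma gaussianWeight_mul_left {σ : ℝ} (hσ : σ ≠ 0) (u : ℝ) :
    gaussianWeight σ (σ * u) = gaussianWeight 1 u := by
  simp only [gaussianWeight]
  congr 1
  field_simp

lemma antitoneOn_gaussianWeight (σ : ℝ) : AntitoneOn (gaussianWeight σ) (Ici 0) :=
  fun u hu v _ huv ↦ exp_le_exp.2 <| div_le_div_of_nonneg_right
    (neg_le_neg (pow_le_pow_left₀ hu huv 2)) (by positivity)

lemma integrable_gaussianWeight {σ : ℝ} (hσ : σ ≠ 0) : Integrable (gaussianWeight σ) := by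
  simp_rw [funext (gaussianWeight_eq_exp_neg_mul_sq σ)]
  exact integrable_exp_neg_mul_sq (by positivity)

lemma integral_Ioi_zero_gaussianWeight {σ : ℝ} (hσ : 0 < σ) :
    ∫ x in Ioi 0, gaussianWeight σ x = σ * √(2 * π) / 2 := by
  simp_rw [gaussianWeight_eq_exp_neg_mul_sq, integral_gaussian_Ioi]
  rw [show π / (2 * σ ^ 2)⁻¹ = σ ^ 2 * (2 * π) by field_simp, sqrt_mul (by positivity),
    sqrt_sq hσ.le]

lemma integral_Ioi_mul_gaussianWeight {σ : ℝ} (hσ : 0 < σ) (c : ℝ) :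
    ∫ x in Ioi (σ * c), gaussianWeight σ x = σ * ∫ x in Ioi c, gaussianWeight 1 x := by
  simp_rw [← integral_comp_mul_left_Ioi' _ c hσ, gaussianWeight_mul_left hσ.ne', smul_eq_mul]

lemma summable_gaussianWeight_int {σ : ℝ} (hσ : σ ≠ 0) :
    Summable fun n : ℤ ↦ gaussianWeight σ n := by
  have hnat : Summable fun n : ℕ ↦ gaussianWeight σ n :=
    (antitoneOn_gaussianWeight σ).summable_of_integrableOn_Ioi_zero
      (integrable_gaussianWeight hσ).integrableOn fun x _ ↦ (gaussianWeight_pos σ x).le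
  refine .of_nat_of_neg hnat ?_
  simpa only [Int.cast_neg, Int.cast_natCast, gaussianWeight_even σ _] using hnat

lemma tsum_gaussianWeight_int_eq {σ : ℝ} (hσ : 0 < σ) :
    ∑' n : ℤ, gaussianWeight σ n = σ * √(2 * π) * ∑' n : ℤ, gaussianWeight (2 * π * σ)⁻¹ n := by
  have ha : 0 < (2 * π * σ ^ 2)⁻¹ := by positivity
  have hscale : (1 : ℝ) / (2 * π * σ ^ 2)⁻¹ ^ (1 / 2 : ℝ) = σ * √(2 * π) := by
    rw [inv_rpow (by positivity), one_div, inv_inv, ← sqrt_eq_rpow, mul_comm, sqrt_mul',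
      sqrt_sq hσ.le]
    positivity
  calc ∑' n : ℤ, gaussianWeight σ n = ∑' n : ℤ, exp (-π * (2 * π * σ ^ 2)⁻¹ * (n : ℝ) ^ 2) := by
        refine tsum_congr fun n ↦ ?_
        rw [gaussianWeight]
        field_simp
    _ = _ := tsum_exp_neg_mul_int_sq ha
    _ = σ * √(2 * π) * ∑' n : ℤ, gaussianWeight (2 * π * σ)⁻¹ n := by
        rw [hscale]
        congr! 1
        refine tsum_congr fun n ↦ ?_
        rw [gaussianWeight]
        field_simp

lemma mul_sqrt_two_pi_le_tsum_gaussianWeight {σ : ℝ} (hσ : 0 < σ) :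
    σ * √(2 * π) ≤ ∑' n : ℤ, gaussianWeight σ n := by
  rw [tsum_gaussianWeight_int_eq hσ]
  refine le_mul_of_one_le_right (by positivity) ?_
  have hsum := summable_gaussianWeight_int (inv_ne_zero (by positivity : 2 * π * σ ≠ 0))
  simpa [gaussianWeight] using hsum.le_tsum 0 fun n _ ↦ (gaussianWeight_pos _ _).le

lemma tsum_gaussianWeight_nat_add_le {σ c : ℝ} (hσ : 0 < σ) {N : ℕ} (hN : σ * c ≤ N) :
    ∑' n : ℕ, gaussianWeight σ (n + N + 1 : ℕ) ≤ σ * ∫ x in Ioi c, gaussianWeight 1 x := by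
  calc ∑' n : ℕ, gaussianWeight σ (n + N + 1 : ℕ)
      ≤ ∫ x in Ioi (N : ℝ), gaussianWeight σ x :=
        AntitoneOn.tsum_comp_add_le_integral N
          ((antitoneOn_gaussianWeight σ).mono (Ici_subset_Ici.2 N.cast_nonneg))
          (integrable_gaussianWeight hσ.ne').integrableOn fun x _ ↦ (gaussianWeight_pos σ x).le
    _ ≤ ∫ x in Ioi (σ * c), gaussianWeight σ x :=
        setIntegral_mono_set (integrable_gaussianWeight hσ.ne').integrableOn
          (.of_forall fun x ↦ (gaussianWeight_pos σ x).le)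
          (.of_forall (Ioi_subset_Ioi hN))
    _ = σ * ∫ x in Ioi c, gaussianWeight 1 x := integral_Ioi_mul_gaussianWeight hσ c

/- The true value is `0.4750021… * √(2 * π)`: the margin is tiny, hence the Taylor
polynomial of degree 11 in `u ^ 2 / 2`, which lies below `exp (-u ^ 2 / 2)`. -/
lemma mul_sqrt_two_pi_le_integral_gaussianWeight_one :
    0.475 * √(2 * π) ≤ ∫ u in (0 : ℝ)..1.96, gaussianWeight 1 u := by
  set p : ℝ → ℝ := fun u ↦ ∑ k ∈ range 12, (-1) ^ k / (2 ^ k * k.factorial) * u ^ (2 * k)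
  have hp : ∀ u, p u ≤ gaussianWeight 1 u := fun u ↦ by
    have h := neg_one_pow_mul_exp_neg_sub_sum_nonneg 12 (by positivity : 0 ≤ u ^ 2 / 2)
    have hpu : p u = ∑ k ∈ range 12, (-(u ^ 2 / 2)) ^ k / k.factorial :=
      sum_congr rfl fun k _ ↦ by rw [neg_pow (u ^ 2 / 2), div_pow, ← pow_mul]; ring
    rw [hpu, gaussianWeight, one_pow, mul_one, neg_div]
    norm_num at h
    linarith
  have hsqrt : √(2 * π) ≤ 2.506629 :=
    sqrt_le_iff.2 ⟨by norm_num, by nlinarith [pi_lt_d6]⟩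
  calc 0.475 * √(2 * π) ≤ 0.475 * 2.506629 := by gcongr
    _ ≤ ∫ u in (0 : ℝ)..1.96, p u := by
        rw [intervalIntegral.integral_finsetSum fun k _ ↦
          (by fun_prop : Continuous fun u : ℝ ↦ _ * u ^ (2 * k)).intervalIntegrable _ _]
        simp_rw [intervalIntegral.integral_const_mul, integral_pow]
        norm_num [sum_range_succ, Nat.factorial]
    _ ≤ ∫ u in (0 : ℝ)..1.96, gaussianWeight 1 u :=
        intervalIntegral.integral_mono_on (by norm_num)
          ((by fun_prop : Continuous p).intervalIntegrable _ _)
          (integrable_gaussianWeight one_ne_zero).intervalIntegrable fun u _ ↦ hp u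

lemma integral_Ioi_gaussianWeight_one_le :
    ∫ x in Ioi 1.96, gaussianWeight 1 x ≤ 0.025 * √(2 * π) := by
  have hsplit := setIntegral_union (Ioc_disjoint_Ioi le_rfl) measurableSet_Ioi
    ((integrable_gaussianWeight one_ne_zero).integrableOn (s := Ioc 0 1.96))
    ((integrable_gaussianWeight one_ne_zero).integrableOn (s := Ioi 1.96))
  rw [Ioc_union_Ioi_eq_Ioi (by norm_num), integral_Ioi_zero_gaussianWeight one_pos,
    ← intervalIntegral.integral_of_le (by norm_num)] at hsplit
  linarith [mul_sqrt_two_pi_le_integral_gaussianWeight_one]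

lemma tsum_ite_abs_le_add_two_mul_tsum_nat_add {g : ℤ → ℝ} (hg : g.Even) (hs : Summable g)
    (N : ℕ) :
    ∑' x : ℤ, (if |x| ≤ N then g x else 0) + 2 * ∑' n : ℕ, g (n + N + 1 : ℕ) = ∑' x, g x := by
  set t : ℤ → ℝ := fun x ↦ if |x| ≤ N then 0 else g x
  have hcore : Summable fun x : ℤ ↦ if |x| ≤ N then g x else 0 :=
    summable_of_ne_finset_zero (s := Icc (-N : ℤ) N) fun x hx ↦
      if_neg (by rwa [Finset.mem_Icc, ← abs_le] at hx)
  have ht : Summable t := (hs.sub hcore).congr fun x ↦ by simp only [t]; split_ifs <;> ring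
  have ht_even : t.Even := fun x ↦ by simp only [t, abs_neg, hg x]
  have ht_nat : Summable fun n : ℕ ↦ t (n + 1 : ℕ) :=
    (summable_nat_add_iff (f := fun n : ℕ ↦ t n) 1).2 (ht.comp_injective Nat.cast_injective)
  have htail : ∑' x, t x = 2 * ∑' n : ℕ, g (n + N + 1 : ℕ) := by
    rw [tsum_int_eq_zero_add_two_mul_tsum_pnat ht_even ht,
      tsum_pnat_eq_tsum_succ (f := fun n : ℕ ↦ t n), ← ht_nat.sum_add_tsum_nat_add N]
    have ht_near : ∀ i ∈ range N, t (i + 1 : ℕ) = 0 := fun i hi ↦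
      if_pos (by rw [Finset.mem_range] at hi; rw [abs_of_nonneg (by positivity)]; omega)
    have ht_far : ∀ i : ℕ, t (i + N + 1 : ℕ) = g (i + N + 1 : ℕ) := fun i ↦
      if_neg (by rw [abs_of_nonneg (by positivity)]; omega)
    have ht_zero : t 0 = 0 := if_pos (by simp)
    simp only [ht_zero, sum_eq_zero ht_near, ht_far, zero_add, nsmul_eq_mul, Nat.cast_ofNat]
  rw [← htail, ← hcore.tsum_add ht]
  congr! 2 with x
  simp only [t]
  split_ifs <;> simp

lemma tsum_ite_abs_le_discreteGaussianPMF {σ : ℝ} (hσ : σ ≠ 0) (N : ℕ) :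
    ∑' x : ℤ, (if |x| ≤ N then discreteGaussianPMF (σ ^ 2) x else 0) =
      1 - 2 * (∑' n : ℕ, gaussianWeight σ (n + N + 1 : ℕ)) / ∑' y : ℤ, gaussianWeight σ y := by
  have hsum := summable_gaussianWeight_int hσ
  have hS : 0 < ∑' y : ℤ, gaussianWeight σ y :=
    hsum.tsum_pos (fun _ ↦ (gaussianWeight_pos _ _).le) 0 (gaussianWeight_pos _ _)
  have hsplit := tsum_ite_abs_le_add_two_mul_tsum_nat_add
    (fun x ↦ by rw [Int.cast_neg, gaussianWeight_even]) hsum N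
  simp only [Int.cast_natCast] at hsplit
  have hpmf : ∀ x : ℤ, (if |x| ≤ N then discreteGaussianPMF (σ ^ 2) x else 0) =
      (if |x| ≤ N then gaussianWeight σ x else 0) / ∑' y : ℤ, gaussianWeight σ y := fun x ↦ by
    split_ifs
    · rfl
    · rw [zero_div]
  rw [tsum_congr hpmf, tsum_div_const, eq_sub_iff_add_eq, ← add_div, hsplit, div_self hS.ne']

/-- 95% concentration of the discrete Gaussian: if `X ∼ N_ℤ(σ²)` then
`Pr[|X| ≤ ⌊1.96σ⌋ + 1] ≥ 0.95`. -/
theorem discreteGaussian_concentration (σ : ℝ) (hσ : 0 < σ) :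
    (0.95 : ℝ) ≤
      ∑' x : ℤ, if |x| ≤ ⌊(1.96 : ℝ) * σ⌋ + 1 then discreteGaussianPMF (σ ^ 2) x else 0 := by
  set N : ℕ := ⌊(1.96 : ℝ) * σ⌋₊ + 1
  have hN : ⌊(1.96 : ℝ) * σ⌋ + 1 = (N : ℤ) := by
    rw [← Int.natCast_floor_eq_floor (by positivity)]
    push_cast [N]
    rfl
  have hσN : σ * 1.96 ≤ N := by
    rw [mul_comm]
    exact_mod_cast (Nat.lt_floor_add_one _).le
  have hS := mul_sqrt_two_pi_le_tsum_gaussianWeight hσ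
  have hT : ∑' n : ℕ, gaussianWeight σ (n + N + 1 : ℕ) ≤ σ * (0.025 * √(2 * π)) :=
    (tsum_gaussianWeight_nat_add_le hσ hσN).trans
      (mul_le_mul_of_nonneg_left integral_Ioi_gaussianWeight_one_le hσ.le)
  rw [hN, tsum_ite_abs_le_discreteGaussianPMF hσ.ne' N, le_sub_comm,
    div_le_iff₀ ((by positivity : 0 < σ * √(2 * π)).trans_le hS)]
  linarith
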